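/- Inner product property of the doubled representation: for all functions f, g : (ZMod 2d)² → ℂ, ⟨P f, g⟩ = ⟨f, P g⟩ = ⟨P f, P g⟩ = (1/d)·Tr(Op[f]†·Op[g]), where P := Wig ∘ Op. -/

import Mathlib

open scoped BigOperators
open Matrix

noncomputable section

/-- `omega n a = exp(2πi a / n)`, the `n`-th roots of unity raised to integer power `a`. -/
def omega (n : ℕ) (a : ℤ) : ℂ := Complex.exp (2 * Real.pi * Complex.I * a / n)

/-- `Zpow d k = Σ_j ω_d^(k·j) |j⟩⟨j|`, the `k`-th power of the clock operator. -/
def Zpow (d : ℕ) (k : ℤ) : Matrix (ZMod d) (ZMod d) ℂ :=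
  Matrix.of fun i j => if i = j then omega d (k * (j.val : ℤ)) else 0

/-- `Xpow d k = Σ_j |j+k⟩⟨j|`, the `k`-th power of the shift operator. -/
def Xpow (d : ℕ) (k : ℤ) : Matrix (ZMod d) (ZMod d) ℂ :=
  Matrix.of fun i j => if i = j + (k : ZMod d) then 1 else 0

/-- The Weyl–Heisenberg displacement operator `V(k) = ω_{2d}^{-k₁k₂} Z^{k₂} X^{k₁}` for `k ∈ ℤ²`. -/
def Vint (d : ℕ) [NeZero d] (k : ℤ × ℤ) : Matrix (ZMod d) (ZMod d) ℂ :=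
  omega (2 * d) (-(k.1 * k.2)) • (Zpow d k.2 * Xpow d k.1)

/-- The WHDO on the doubled phase space `(ZMod (2d))²`. -/
def V (d : ℕ) [NeZero d] (m : ZMod (2 * d) × ZMod (2 * d)) : Matrix (ZMod d) (ZMod d) ℂ :=
  Vint d ((m.1.val : ℤ), (m.2.val : ℤ))

/-- Discrete parity operator `R = Σ_j |-j⟩⟨j|`. -/
def R (d : ℕ) : Matrix (ZMod d) (ZMod d) ℂ :=
  Matrix.of fun i j => if i = -j then 1 else 0

/-- Doubled phase-point operator `A(m) = V(m)·R`. -/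
def A (d : ℕ) [NeZero d] (m : ZMod (2 * d) × ZMod (2 * d)) : Matrix (ZMod d) (ZMod d) ℂ :=
  V d m * R d

variable (d : ℕ) [NeZero d]

/-- Doubled Wigner transform: `Wig[O](m) = (1/(2d)) Tr(A(m)† O)`. -/
def Wig (O : Matrix (ZMod d) (ZMod d) ℂ) (m : ZMod (2 * d) × ZMod (2 * d)) : ℂ :=
  (1 / (2 * (d : ℂ))) * ((A d m)ᴴ * O).trace

/-- Doubled Weyl transform: `Op[f] = (1/2) Σ_m f(m) A(m)`. -/
def OpW (f : ZMod (2 * d) × ZMod (2 * d) → ℂ) : Matrix (ZMod d) (ZMod d) ℂ :=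
  (1 / 2 : ℂ) • ∑ m : ZMod (2 * d) × ZMod (2 * d), f m • A d m

/-- The projector `P = Wig ∘ Op` on functions on the doubled phase space. -/
def P (f : ZMod (2 * d) × ZMod (2 * d) → ℂ) : ZMod (2 * d) × ZMod (2 * d) → ℂ :=
  Wig d (OpW d f)

/-- Inner product on functions on the doubled phase space. -/
def ip (f g : ZMod (2 * d) × ZMod (2 * d) → ℂ) : ℂ :=
  ∑ m : ZMod (2 * d) × ZMod (2 * d), (starRingEnd ℂ) (f m) * g m

/-- Cross-correlation `(f ⋆ g)(m) = Σ_{m'} conj(f m') g(m'+m)`. -/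
def crossCor (f g : ZMod (2 * d) × ZMod (2 * d) → ℂ) (m : ZMod (2 * d) × ZMod (2 * d)) : ℂ :=
  ∑ m' : ZMod (2 * d) × ZMod (2 * d), (starRingEnd ℂ) (f m') * g (m' + m)

/-- The doubling map `ZMod d → ZMod (2d)`, `a ↦ 2a`. -/
def dbl (a : ZMod d) : ZMod (2 * d) := ((2 * a.val : ℕ) : ZMod (2 * d))

/-- The doubling map on the phase space. -/
def dbl2 (α : ZMod d × ZMod d) : ZMod (2 * d) × ZMod (2 * d) := (dbl d α.1, dbl d α.2)

/-- A stencil `M` is valid if its projection `M̄ = P M` is real-valued (M1),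
sums to 1 (M2), and satisfies the autocorrelation condition (M3). -/
def IsValidStencil (M : ZMod (2 * d) × ZMod (2 * d) → ℂ) : Prop :=
  (∀ m, (starRingEnd ℂ) (P d M m) = P d M m) ∧
  (∑ m : ZMod (2 * d) × ZMod (2 * d), P d M m) = 1 ∧
  (∀ α : ZMod d × ZMod d,
    crossCor d (P d M) (P d M) (dbl2 d α) = if α = 0 then 1 else 0)

/-- The `M`-PPO frame generated by a stencil `M`:
`A^M(α) = (1/2) Σ_{m'} M(m') A(m' + 2α)`. -/
def AM (M : ZMod (2 * d) × ZMod (2 * d) → ℂ) (α : ZMod d × ZMod d) :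
    Matrix (ZMod d) (ZMod d) ℂ :=
  (1 / 2 : ℂ) • ∑ m' : ZMod (2 * d) × ZMod (2 * d), M m' • A d (m' + dbl2 d α)

/-- A family of phase-point operators on `(ZMod d)²` is a valid PPO frame if it is
Hermitian (A1), trace-1 (A2), orthogonal (A3), and WHDO-covariant (A4). -/
def IsValidPPOFrame (B : ZMod d × ZMod d → Matrix (ZMod d) (ZMod d) ℂ) : Prop :=
  (∀ α, (B α)ᴴ = B α) ∧
  (∀ α, (B α).trace = 1) ∧
  (∀ α β, ((B α)ᴴ * B β).trace = if α = β then (d : ℂ) else 0) ∧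
  (∀ (k : ℤ × ℤ) (α : ZMod d × ZMod d),
    Vint d k * B α * (Vint d k)ᴴ = B (α + ((k.1 : ZMod d), (k.2 : ZMod d))))

/-- The `M`-Wigner transform: `Wig^M[O](α) = (1/d) Tr(A^M(α)† O)`. -/
def WigM (M : ZMod (2 * d) × ZMod (2 * d) → ℂ) (O : Matrix (ZMod d) (ZMod d) ℂ)
    (α : ZMod d × ZMod d) : ℂ :=
  (1 / (d : ℂ)) * ((AM d M α)ᴴ * O).trace

/-- The `M`-Weyl transform: `Op^M[f] = Σ_α f(α) A^M(α)`. -/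
def OpM (M : ZMod (2 * d) × ZMod (2 * d) → ℂ) (f : ZMod d × ZMod d → ℂ) :
    Matrix (ZMod d) (ZMod d) ℂ :=
  ∑ α : ZMod d × ZMod d, f α • AM d M α

/-- The symplectic discrete Fourier transform. -/
def SDFT (f : ZMod (2 * d) × ZMod (2 * d) → ℂ) (m : ZMod (2 * d) × ZMod (2 * d)) : ℂ :=
  (1 / (2 * (d : ℂ))) * ∑ m' : ZMod (2 * d) × ZMod (2 * d),
    omega (2 * d) (-((m.1.val : ℤ) * (m'.2.val : ℤ) - (m.2.val : ℤ) * (m'.1.val : ℤ))) * f m'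


/-- Coarse-grain-stencil PPO frame: `B(α) = (1/2) Σ_{b∈{0,1}²} A(2α + b)`. -/
def Bcgs (α : ZMod d × ZMod d) : Matrix (ZMod d) (ZMod d) ℂ :=
  (1 / 2 : ℂ) • ∑ b : ZMod 2 × ZMod 2,
    A d (dbl d α.1 + (b.1.val : ZMod (2 * d)), dbl d α.2 + (b.2.val : ZMod (2 * d)))

/-- Momentum basis state `|p⟩ = (1/√d) Σ_j ω_d^{p j} |j⟩`. -/
def pvec (p : ZMod d) : ZMod d → ℂ :=
  fun j => (1 / ((Real.sqrt d : ℝ) : ℂ)) * omega d ((p.val : ℤ) * (j.val : ℤ))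

/-- One-dimensional Dirichlet kernel `K(m) = (1/d) Σ_{t=-(d-1)/2}^{(d-1)/2} ω_{2d}^{t m}`. -/
def Kdir (m : ZMod (2 * d)) : ℂ :=
  (1 / (d : ℂ)) * ∑ t ∈ Finset.Icc (-(((d : ℤ) - 1) / 2)) (((d : ℤ) - 1) / 2),
    omega (2 * d) (t * (m.val : ℤ))

end

lemma omega_add (n : ℕ) (a b : ℤ) : omega n (a + b) = omega n a * omega n b := by
  rw [omega, omega, omega, ← Complex.exp_add]
  congr 1
  push_cast
  ring

lemma omega_dvd (n : ℕ) (a : ℤ) (h : (n : ℤ) ∣ a) : omega n a = 1 := by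
  rcases h with ⟨c, rfl⟩
  rcases Nat.eq_zero_or_pos n with h0 | h0
  · subst h0; simp [omega]
  rw [omega]
  have hn : (n : ℂ) ≠ 0 := Nat.cast_ne_zero.mpr (by omega)
  have : 2 * (Real.pi : ℂ) * Complex.I * (((n : ℤ) * c : ℤ) : ℂ) / n = c * (2 * Real.pi * Complex.I) := by
    push_cast
    field_simp
  rw [this, Complex.exp_int_mul_two_pi_mul_I]

lemma conj_omega (n : ℕ) (a : ℤ) : (starRingEnd ℂ) (omega n a) = omega n (-a) := by
  rw [omega, omega, ← Complex.exp_conj]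
  congr 1
  simp only [map_div₀, _root_.map_mul, Complex.conj_I, map_ofNat, map_intCast, map_natCast,
    Complex.conj_ofReal]
  push_cast
  ring

lemma omega_pow (n : ℕ) (a : ℤ) (m : ℕ) : omega n a ^ m = omega n (m * a) := by
  induction m with
  | zero => simp [omega]
  | succ k ih =>
    rw [pow_succ, ih, ← omega_add]
    congr 1
    push_cast
    ring

lemma sum_zmod_eq (n : ℕ) [NeZero n] (f : ZMod n → ℂ) :
    ∑ x : ZMod n, f x = ∑ t ∈ Finset.range n, f (t : ZMod n) := by
  refine (Finset.sum_nbij' (fun t : ℕ => (t : ZMod n)) (fun x : ZMod n => x.val)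
    (fun a _ => Finset.mem_univ _) (fun a _ => Finset.mem_range.mpr a.val_lt)
    (fun a ha => ZMod.val_cast_of_lt (Finset.mem_range.mp ha))
    (fun a _ => ZMod.natCast_zmod_val a) (fun a _ => rfl)).symm


lemma omega_ne_one (n : ℕ) [NeZero n] (c : ℤ) (h : ¬ (n : ℤ) ∣ c) : omega n c ≠ 1 := by
  intro he
  rw [omega, Complex.exp_eq_one_iff] at he
  obtain ⟨k, hk⟩ := he
  have hn : (n : ℂ) ≠ 0 := Nat.cast_ne_zero.mpr (NeZero.ne n)
  have hpi : (2 : ℂ) * Real.pi * Complex.I ≠ 0 := by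
    simp [Real.pi_ne_zero, Complex.I_ne_zero]
  apply h
  refine ⟨k, ?_⟩
  field_simp at hk
  have h2 : (c : ℂ) * (2 * Real.pi * Complex.I) = ((k : ℂ) * n) * (2 * Real.pi * Complex.I) := by
    linear_combination (2 * Real.pi * Complex.I) * hk
  have h3 : (c : ℂ) = (n : ℂ) * k := by
    have := mul_right_cancel₀ hpi h2
    linear_combination this
  exact_mod_cast h3

lemma sum_range_omega (n : ℕ) [NeZero n] (c : ℤ) :
    ∑ t ∈ Finset.range n, omega n ((t : ℤ) * c) = if (n : ℤ) ∣ c then (n : ℂ) else 0 := by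
  have hterm : ∀ t : ℕ, omega n ((t : ℤ) * c) = omega n c ^ t := fun t => (omega_pow n c t).symm
  split_ifs with h
  · rw [Finset.sum_congr rfl fun t _ => omega_dvd n _ (Dvd.dvd.mul_left h _)]
    simp
  · rw [Finset.sum_congr rfl fun t _ => hterm t, geom_sum_eq (omega_ne_one n c h)]
    rw [omega_pow, omega_dvd n _ ⟨c, by ring⟩]
    simp


variable (d : ℕ) [NeZero d]

instance : NeZero (2 * d) := ⟨by have := NeZero.ne d; omega⟩

lemma A_apply (m : ZMod (2 * d) × ZMod (2 * d)) (i j : ZMod d) :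
    A d m i j = omega (2 * d) (-((m.1.val : ℤ) * (m.2.val : ℤ))) *
      (omega d ((m.2.val : ℤ) * (i.val : ℤ)) *
      (if i + j = ((m.1.val : ℕ) : ZMod d) then 1 else 0)) := by
  have hc : (((m.1.val : ℤ)) : ZMod d) = ((m.1.val : ℕ) : ZMod d) := by push_cast; ring
  simp only [A, V, Vint, Zpow, Xpow, R, Matrix.smul_mul, Matrix.smul_apply, Matrix.mul_apply,
    Matrix.of_apply, smul_eq_mul, ite_mul, mul_ite, one_mul, mul_one, zero_mul, mul_zero,
    Finset.sum_ite_eq, Finset.sum_ite_eq', Finset.mem_univ, if_true]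
  rw [hc]
  by_cases h : i + j = ((m.1.val : ℕ) : ZMod d)
  · have h1 : i = -j + ((m.1.val : ℕ) : ZMod d) := by rw [← h]; ring
    rw [if_pos h1, if_pos h, ← h1]
  · have h1 : ¬ (i = -j + ((m.1.val : ℕ) : ZMod d)) := fun he => h (by rw [he]; ring)
    rw [if_neg h1, if_neg h]

lemma omega_two_mul (n : ℕ) [NeZero n] (a : ℤ) : omega (2 * n) (2 * a) = omega n a := by
  have hn : (n : ℂ) ≠ 0 := Nat.cast_ne_zero.mpr (NeZero.ne n)
  rw [omega, omega]
  congr 1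
  push_cast
  field_simp

lemma sum_zmod2_omega (c : ℤ) :
    ∑ x : ZMod (2 * d), omega d ((x.val : ℤ) * c) =
      if (d : ℤ) ∣ c then (2 * d : ℂ) else 0 := by
  have h1 : ∀ x : ZMod (2 * d), omega d ((x.val : ℤ) * c) =
      omega (2 * d) ((x.val : ℤ) * (2 * c)) := by
    intro x
    rw [show (x.val : ℤ) * (2 * c) = 2 * ((x.val : ℤ) * c) by ring, omega_two_mul]
  rw [Finset.sum_congr rfl fun x _ => h1 x, sum_zmod_eq (2 * d)
    (fun x => omega (2 * d) ((x.val : ℤ) * (2 * c)))]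
  have h2 : ∀ t ∈ Finset.range (2 * d), omega (2 * d) ((((t : ZMod (2 * d)).val : ℤ)) * (2 * c))
      = omega (2 * d) ((t : ℤ) * (2 * c)) := by
    intro t ht
    rw [ZMod.val_cast_of_lt (Finset.mem_range.mp ht)]
  rw [Finset.sum_congr rfl h2, sum_range_omega (2 * d) (2 * c)]
  have h3 : ((2 * d : ℕ) : ℤ) ∣ 2 * c ↔ (d : ℤ) ∣ c := by
    constructor
    · rintro ⟨e, he⟩; exact ⟨e, by push_cast at he; linarith⟩
    · rintro ⟨e, he⟩; exact ⟨e, by push_cast; rw [he]; ring⟩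
  simp only [h3]
  split_ifs <;> push_cast <;> ring

lemma count_fiber (v : ZMod d) :
    ∑ m1 : ZMod (2 * d), (if v = ((m1.val : ℕ) : ZMod d) then (1 : ℂ) else 0) = 2 := by
  rw [sum_zmod_eq (2 * d)]
  have h2 : ∀ t ∈ Finset.range (2 * d),
      (if v = (((t : ZMod (2 * d)).val : ℕ) : ZMod d) then (1 : ℂ) else 0) =
      (if v = ((t : ℕ) : ZMod d) then (1 : ℂ) else 0) := by
    intro t ht
    rw [ZMod.val_cast_of_lt (Finset.mem_range.mp ht)]
  rw [Finset.sum_congr rfl h2]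
  have hd : 0 < d := Nat.pos_of_ne_zero (NeZero.ne d)
  rw [Finset.range_eq_Ico, ← Finset.sum_Ico_consecutive _ (Nat.zero_le d) (by omega : d ≤ 2 * d)]
  have key : ∀ s : ℕ, ∑ t ∈ Finset.Ico s (s + d), (if v = ((t : ℕ) : ZMod d) then (1 : ℂ) else 0) = 1 := by
    intro s
    rw [Finset.sum_Ico_eq_sum_range]
    simp only [Nat.add_sub_cancel_left, Nat.add_sub_cancel]
    set w := v - (s : ZMod d) with hw
    have hco : ∀ r ∈ Finset.range d,
        (if v = ((s + r : ℕ) : ZMod d) then (1 : ℂ) else 0) = (if r = w.val then 1 else 0) := by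
      intro r hr
      have hr' := Finset.mem_range.mp hr
      have hiff : (v = ((s + r : ℕ) : ZMod d)) ↔ r = w.val := by
        push_cast
        constructor
        · intro h
          have h2 : ((r : ℕ) : ZMod d) = w := by rw [hw, h]; ring
          rw [← h2, ZMod.val_cast_of_lt hr']
        · intro h
          have h2 : ((r : ℕ) : ZMod d) = w := by rw [h, ZMod.natCast_zmod_val]
          rw [hw] at h2
          linear_combination -h2
      rw [if_congr hiff rfl rfl]
    rw [Finset.sum_congr rfl hco, Finset.sum_ite_eq' (Finset.range d) w.val (fun _ => (1 : ℂ)),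
      if_pos (Finset.mem_range.mpr w.val_lt)]
  have e1 := key 0
  have e2 := key d
  simp only [Nat.zero_add] at e1
  rw [show 2 * d = d + d by ring] at *
  rw [e1, e2]
  norm_num

lemma sum_ind (u v : ZMod d) :
    ∑ m1 : ZMod (2 * d), (if u = ((m1.val : ℕ) : ZMod d) then (1 : ℂ) else 0) *
      (if v = ((m1.val : ℕ) : ZMod d) then (1 : ℂ) else 0) =
    if u = v then 2 else 0 := by
  by_cases h : u = v
  · subst h
    rw [if_pos rfl, ← count_fiber d u]
    exact Finset.sum_congr rfl fun x _ => by split_ifs <;> ring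
  · rw [if_neg h, Finset.sum_eq_zero]
    intro x _
    split_ifs with h1 h2
    · exact absurd (h1.trans h2.symm) h
    all_goals ring

lemma sum_conjA_mul_A (i j t k : ZMod d) :
    ∑ m : ZMod (2 * d) × ZMod (2 * d), (starRingEnd ℂ) (A d m t k) * A d m i j =
      if t = i ∧ k = j then (4 * d : ℂ) else 0 := by
  rw [Fintype.sum_prod_type]
  have hterm : ∀ m1 m2 : ZMod (2 * d),
      (starRingEnd ℂ) (A d (m1, m2) t k) * A d (m1, m2) i j =
      ((if t + k = ((m1.val : ℕ) : ZMod d) then (1 : ℂ) else 0) *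
       (if i + j = ((m1.val : ℕ) : ZMod d) then (1 : ℂ) else 0)) *
      omega d ((m2.val : ℤ) * ((i.val : ℤ) - (t.val : ℤ))) := by
    intro m1 m2
    rw [A_apply, A_apply]
    simp only [_root_.map_mul, conj_omega, apply_ite (starRingEnd ℂ), _root_.map_one,
      _root_.map_zero]
    have hcan : omega (2 * d) (-(-((m1.val : ℤ) * (m2.val : ℤ)))) *
        omega (2 * d) (-((m1.val : ℤ) * (m2.val : ℤ))) = 1 := by
      rw [← omega_add]
      exact omega_dvd _ _ (by simp)
    have hsplit : omega d ((m2.val : ℤ) * ((i.val : ℤ) - (t.val : ℤ))) =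
        omega d (-((m2.val : ℤ) * (t.val : ℤ))) * omega d ((m2.val : ℤ) * (i.val : ℤ)) := by
      rw [← omega_add]
      congr 1
      ring
    rw [hsplit]
    linear_combination (omega d (-((m2.val : ℤ) * (t.val : ℤ))) *
      (if t + k = ((m1.val : ℕ) : ZMod d) then (1 : ℂ) else 0) *
      omega d ((m2.val : ℤ) * (i.val : ℤ)) *
      (if i + j = ((m1.val : ℕ) : ZMod d) then (1 : ℂ) else 0)) * hcan
  simp only [hterm]
  rw [Finset.sum_congr rfl fun m1 _ => (Finset.mul_sum _ _ _).symm]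
  rw [show (∑ m2 : ZMod (2 * d), omega d ((m2.val : ℤ) * ((i.val : ℤ) - (t.val : ℤ)))) =
    if (d : ℤ) ∣ ((i.val : ℤ) - (t.val : ℤ)) then (2 * d : ℂ) else 0 from sum_zmod2_omega d _]
  have hdvd : ((d : ℤ) ∣ ((i.val : ℤ) - (t.val : ℤ))) ↔ t = i := by
    rw [← ZMod.intCast_zmod_eq_zero_iff_dvd]
    push_cast
    rw [ZMod.natCast_zmod_val, ZMod.natCast_zmod_val, sub_eq_zero]
    exact ⟨fun h => h.symm, fun h => h.symm⟩
  by_cases hti : t = i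
  · subst hti
    rw [if_pos (hdvd.mpr rfl)] -- careful: condition is the dvd; rewrite via hdvd
    rw [← Finset.sum_mul, sum_ind]
    by_cases hkj : k = j
    · subst hkj
      rw [if_pos rfl, if_pos ⟨rfl, rfl⟩]
      ring
    · rw [if_neg (fun h => hkj (by exact add_left_cancel h)), if_neg (fun h => hkj h.2)]
      ring
  · rw [if_neg (fun h => hti (hdvd.mp h)), if_neg (fun h => hti h.1)]
    simp

lemma A_frame (O : Matrix (ZMod d) (ZMod d) ℂ) :
    ∑ m : ZMod (2 * d) × ZMod (2 * d), ((A d m)ᴴ * O).trace • A d m = (4 * (d : ℂ)) • O := by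
  ext i j
  simp only [Matrix.sum_apply, Matrix.smul_apply, smul_eq_mul, Matrix.trace, Matrix.diag,
    Matrix.mul_apply, Matrix.conjTranspose_apply]
  have step1 : ∀ m : ZMod (2 * d) × ZMod (2 * d),
      (∑ k, ∑ t, star (A d m t k) * O t k) * A d m i j =
      ∑ k, ∑ t, (star (A d m t k) * A d m i j) * O t k := by
    intro m
    rw [Finset.sum_mul]
    refine Finset.sum_congr rfl fun k _ => ?_
    rw [Finset.sum_mul]
    exact Finset.sum_congr rfl fun t _ => by ring
  simp only [step1]
  rw [Finset.sum_comm]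
  have step2 : ∀ k, (∑ m : ZMod (2 * d) × ZMod (2 * d), ∑ t, (star (A d m t k) * A d m i j) * O t k)
      = ∑ t, (if t = i ∧ k = j then (4 * (d : ℂ)) else 0) * O t k := by
    intro k
    rw [Finset.sum_comm]
    refine Finset.sum_congr rfl fun t _ => ?_
    rw [← Finset.sum_mul]
    congr 1
    simpa only [starRingEnd_apply] using sum_conjA_mul_A d i j t k
  simp only [step2]
  rw [Finset.sum_comm]
  rw [Finset.sum_eq_single i]
  · rw [Finset.sum_eq_single j]
    · simp
    · intro b _ hb; simp [Ne.symm hb, hb]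
    · simp
  · intro b _ hb
    apply Finset.sum_eq_zero
    intro k _
    simp [hb]
  · simp

lemma two_smul_OpW (g : ZMod (2 * d) × ZMod (2 * d) → ℂ) :
    ∑ m : ZMod (2 * d) × ZMod (2 * d), g m • A d m = (2 : ℂ) • OpW d g := by
  rw [OpW, smul_smul]
  norm_num

lemma OpW_P (f : ZMod (2 * d) × ZMod (2 * d) → ℂ) : OpW d (P d f) = OpW d f := by
  have hd : (d : ℂ) ≠ 0 := Nat.cast_ne_zero.mpr (NeZero.ne d)
  rw [OpW, P]
  simp only [Wig, mul_smul]
  rw [← Finset.smul_sum, A_frame, smul_smul, smul_smul]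
  rw [show (1 / 2 : ℂ) * (1 / (2 * (d : ℂ))) * (4 * (d : ℂ)) = 1 by field_simp; ring, one_smul]

lemma L1 (f g : ZMod (2 * d) × ZMod (2 * d) → ℂ) :
    ip d (P d f) g = (1 / (d : ℂ)) * ((OpW d f)ᴴ * OpW d g).trace := by
  have hd : (d : ℂ) ≠ 0 := Nat.cast_ne_zero.mpr (NeZero.ne d)
  rw [ip]
  have hterm : ∀ m, (starRingEnd ℂ) (P d f m) * g m =
      (1 / (2 * (d : ℂ))) * (((OpW d f)ᴴ * A d m).trace * g m) := by
    intro m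
    rw [P, Wig, _root_.map_mul]
    have h1 : (starRingEnd ℂ) (1 / (2 * (d : ℂ))) = 1 / (2 * (d : ℂ)) := by
      rw [map_div₀, _root_.map_one, _root_.map_mul, Complex.conj_ofNat, Complex.conj_natCast]
    have h2 : (starRingEnd ℂ) (((A d m)ᴴ * OpW d f).trace) = ((OpW d f)ᴴ * A d m).trace := by
      rw [starRingEnd_apply, ← Matrix.trace_conjTranspose, Matrix.conjTranspose_mul,
        Matrix.conjTranspose_conjTranspose]
    rw [h1, h2]
    ring
  rw [Finset.sum_congr rfl fun m _ => hterm m, ← Finset.mul_sum]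
  have h3 : ∑ m : ZMod (2 * d) × ZMod (2 * d), ((OpW d f)ᴴ * A d m).trace * g m =
      ((OpW d f)ᴴ * ((2 : ℂ) • OpW d g)).trace := by
    rw [← two_smul_OpW, Matrix.mul_sum, Matrix.trace_sum]
    refine Finset.sum_congr rfl fun m _ => ?_
    rw [Matrix.mul_smul, Matrix.trace_smul, smul_eq_mul, mul_comm]
  rw [h3, Matrix.mul_smul, Matrix.trace_smul, smul_eq_mul]
  field_simp

lemma L2 (f g : ZMod (2 * d) × ZMod (2 * d) → ℂ) :
    ip d f (P d g) = (1 / (d : ℂ)) * ((OpW d f)ᴴ * OpW d g).trace := by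
  have hd : (d : ℂ) ≠ 0 := Nat.cast_ne_zero.mpr (NeZero.ne d)
  rw [ip]
  have hterm : ∀ m, (starRingEnd ℂ) (f m) * P d g m =
      (1 / (2 * (d : ℂ))) * (((starRingEnd ℂ) (f m)) * ((A d m)ᴴ * OpW d g).trace) := by
    intro m
    rw [P, Wig]
    ring
  rw [Finset.sum_congr rfl fun m _ => hterm m, ← Finset.mul_sum]
  have h3 : ∑ m : ZMod (2 * d) × ZMod (2 * d),
      (starRingEnd ℂ) (f m) * ((A d m)ᴴ * OpW d g).trace =
      (((2 : ℂ) • OpW d f)ᴴ * OpW d g).trace := by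
    rw [← two_smul_OpW, Matrix.conjTranspose_sum, Matrix.sum_mul, Matrix.trace_sum]
    refine Finset.sum_congr rfl fun m _ => ?_
    rw [Matrix.conjTranspose_smul, Matrix.smul_mul, Matrix.trace_smul]
    simp [smul_eq_mul]
  rw [h3, Matrix.conjTranspose_smul, Matrix.smul_mul, Matrix.trace_smul, smul_eq_mul,
    show star (2 : ℂ) = 2 from by rw [Complex.star_def, Complex.conj_ofNat]]
  field_simp


theorem stmt7 (d : ℕ) [NeZero d] (f g : ZMod (2 * d) × ZMod (2 * d) → ℂ) :
    ip d (P d f) g = ip d f (P d g) ∧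
    ip d f (P d g) = ip d (P d f) (P d g) ∧
    ip d (P d f) (P d g) = (1 / (d : ℂ)) * ((OpW d f)ᴴ * OpW d g).trace := by
  refine ⟨?_, ?_, ?_⟩
  · rw [L1, L2]
  · rw [L2 d f g, L2 d (P d f) g, OpW_P]
  · rw [L2 d (P d f) g, OpW_P]
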